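/- Let A be an m×n real matrix whose columns have ℓ2-norm 1, let s ≥ 1, a ≥ 1 and b be integers with 1 ≤ b ≤ 4a and s + a + b − 1 ≤ n − 1, and let τ > 0. Assume μ₁(A, s+a−1) + τ·√(s/b)·μ₁(A, s+a+b−1) < 1. Then for every x ∈ ℝ^n and every index set S ⊆ {1,…,n} with |S| ≤ s and ‖x_{S^c}‖₁ ≤ τ‖x_S‖₁, one has ‖Ax‖₂ ≥ [ (1 − μ₁(A,s+a−1) − τ√(s/b)·μ₁(A,s+a+b−1)) / √(1 + μ₁(A,s+a−1)) ]·‖x_S‖₂. In particular A satisfies the restricted eigenvalue condition of order s and τ with K(s,τ,A) ≥ (1 − μ₁(A,s+a−1) − τ√(s/b)·μ₁(A,s+a+b−1)) / √(1 + μ₁(A,s+a−1)). -/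

import Mathlib

/-!
Sort the entries of `x` outside `S` by decreasing modulus, let `J` be `S` together with the `a`
largest of them, and cut the remaining ones into consecutive blocks `B₀, B₁, …` of `b` entries,
so that `x = x_J + ∑ₖ x_{Bₖ}`. The Gram matrix `AᵀA` has unit diagonal and off-diagonal row sums
bounded by `μ₁`, so Schur's test gives `|‖A x_J‖² - ‖x_J‖²| ≤ μ₁(s+a-1) ‖x_J‖²` and
`|⟨A x_{Bₖ}, A x_J⟩| ≤ μ₁(s+a+b-1) ‖x_{Bₖ}‖ ‖x_J‖`. The shifting inequality, which needs
`b ≤ 4a`, bounds `√b ∑ₖ ‖x_{Bₖ}‖₂` by `‖x_{Sᶜ}‖₁ ≤ τ ‖x_S‖₁ ≤ τ √s ‖x_S‖₂ ≤ τ √s ‖x_J‖₂`.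
Hence `⟨Ax, A x_J⟩ ≥ κ ‖x_J‖²`, `κ` being the numerator of the bound, while Cauchy–Schwarz gives
`⟨Ax, A x_J⟩ ≤ ‖Ax‖ √(1 + μ₁(s+a-1)) ‖x_J‖`; divide, and use `‖x_S‖ ≤ ‖x_J‖`.
-/

open scoped Classical

/-- Cumulative coherence function μ₁(A, s). -/
noncomputable def mu1 {m n : ℕ} (A : Matrix (Fin m) (Fin n) ℝ) (s : ℕ) : ℝ :=
  sSup {t : ℝ | ∃ S : Finset (Fin n), S.card ≤ s ∧ ∃ i : Fin n, i ∉ S ∧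
    t = ∑ j ∈ S, |∑ k : Fin m, A k i * A k j|}

open Finset Matrix

theorem abs_sum_sum_mul_le_of_sum_abs_le {ι κ : Type*} (s : Finset ι) (t : Finset κ)
    (G : ι → κ → ℝ) (u : ι → ℝ) (v : κ → ℝ) {μ : ℝ}
    (hrow : ∀ i ∈ s, ∑ j ∈ t, |G i j| ≤ μ) (hcol : ∀ j ∈ t, ∑ i ∈ s, |G i j| ≤ μ) :
    |∑ i ∈ s, ∑ j ∈ t, u i * G i j * v j| ≤
      μ * (√(∑ i ∈ s, u i ^ 2) * √(∑ j ∈ t, v j ^ 2)) := by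
  rcases s.eq_empty_or_nonempty with rfl | ⟨i₀, hi₀⟩
  · simp
  have hμ : 0 ≤ μ := (sum_nonneg fun j _ => abs_nonneg _).trans (hrow i₀ hi₀)
  have hu : ∑ i ∈ s, ∑ j ∈ t, u i ^ 2 * |G i j| ≤ μ * ∑ i ∈ s, u i ^ 2 := by
    rw [mul_sum]
    refine sum_le_sum fun i hi => ?_
    rw [← mul_sum, mul_comm]
    exact mul_le_mul_of_nonneg_right (hrow i hi) (sq_nonneg _)
  have hv : ∑ i ∈ s, ∑ j ∈ t, |G i j| * v j ^ 2 ≤ μ * ∑ j ∈ t, v j ^ 2 := by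
    rw [sum_comm, mul_sum]
    refine sum_le_sum fun j hj => ?_
    rw [← sum_mul]
    exact mul_le_mul_of_nonneg_right (hcol j hj) (sq_nonneg _)
  -- Cauchy–Schwarz for the factorisation `|u i| √|G i j| · √|G i j| |v j|`
  calc |∑ i ∈ s, ∑ j ∈ t, u i * G i j * v j|
      ≤ ∑ p ∈ s ×ˢ t, (|u p.1| * √|G p.1 p.2|) * (√|G p.1 p.2| * |v p.2|) := by
        rw [sum_product]
        refine (abs_sum_le_sum_abs _ _).trans (sum_le_sum fun i _ => ?_)
        refine (abs_sum_le_sum_abs _ _).trans_eq (sum_congr rfl fun j _ => ?_)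
        rw [abs_mul, abs_mul]
        linear_combination (-|u i| * |v j|) * Real.mul_self_sqrt (abs_nonneg (G i j))
    _ ≤ √(∑ p ∈ s ×ˢ t, (|u p.1| * √|G p.1 p.2|) ^ 2) *
          √(∑ p ∈ s ×ˢ t, (√|G p.1 p.2| * |v p.2|) ^ 2) :=
        Real.sum_mul_le_sqrt_mul_sqrt _ _ _
    _ = √(∑ i ∈ s, ∑ j ∈ t, u i ^ 2 * |G i j|) * √(∑ i ∈ s, ∑ j ∈ t, |G i j| * v j ^ 2) := by
        simp only [sum_product, mul_pow, sq_abs, Real.sq_sqrt (abs_nonneg _)]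
    _ ≤ √(μ * ∑ i ∈ s, u i ^ 2) * √(μ * ∑ j ∈ t, v j ^ 2) := by gcongr
    _ = μ * (√(∑ i ∈ s, u i ^ 2) * √(∑ j ∈ t, v j ^ 2)) := by
        rw [Real.sqrt_mul hμ, Real.sqrt_mul hμ]
        linear_combination (√(∑ i ∈ s, u i ^ 2) * √(∑ j ∈ t, v j ^ 2)) * Real.mul_self_sqrt hμ

theorem sum_sum_mul_eq_of_support {ι κ : Type*} [Fintype ι] [Fintype κ] {U : Finset ι}
    {V : Finset κ} {u : ι → ℝ} {v : κ → ℝ} (hu : ∀ i ∉ U, u i = 0) (hv : ∀ j ∉ V, v j = 0)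
    (G : ι → κ → ℝ) :
    ∑ i, ∑ j, u i * G i j * v j = ∑ i ∈ U, ∑ j ∈ V, u i * G i j * v j := by
  rw [← sum_subset (subset_univ U) fun i _ hi => by simp [hu i hi]]
  exact sum_congr rfl fun i _ => (sum_subset (subset_univ V) fun j _ hj => by simp [hv j hj]).symm

theorem sqrt_sum_sq_sum_le {ι β : Type*} (s : Finset β) (T : Finset ι) (f : ι → β → ℝ) :
    √(∑ x ∈ s, (∑ m ∈ T, f m x) ^ 2) ≤ ∑ m ∈ T, √(∑ x ∈ s, f m x ^ 2) := by
  have hnorm : ∀ g : β → ℝ, ‖WithLp.toLp 2 (fun x : s => g x)‖ = √(∑ x ∈ s, g x ^ 2) := by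
    intro g
    rw [EuclideanSpace.norm_eq]
    simp only [Real.norm_eq_abs, sq_abs]
    rw [sum_coe_sort s (fun x => g x ^ 2)]
  simp only [← hnorm]
  refine le_of_eq_of_le ?_ (norm_sum_le T fun m => WithLp.toLp 2 (fun x : s => f m x))
  congr 1
  ext x
  simp

theorem sum_abs_le_sqrt_card_mul_sqrt {ι : Type*} (s : Finset ι) (f : ι → ℝ) :
    ∑ i ∈ s, |f i| ≤ √(s.card) * √(∑ i ∈ s, f i ^ 2) := by
  simpa [mul_comm] using Real.sum_mul_le_sqrt_mul_sqrt s (fun i => |f i|) fun _ => 1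

theorem div_mul_le_of_mul_sq_le {κ D X Y Z : ℝ} (hD : 0 < D) (hX : 0 ≤ X) (hXY : X ≤ Y)
    (hZ : 0 ≤ Z) (h : κ * Y ^ 2 ≤ Z * D * Y) : κ / D * X ≤ Z := by
  rcases le_or_gt κ 0 with hκ | hκ
  · exact (mul_nonpos_of_nonpos_of_nonneg (div_nonpos_of_nonpos_of_nonneg hκ hD.le) hX).trans hZ
  rw [div_mul_eq_mul_div, div_le_iff₀ hD]
  rcases hX.eq_or_lt with rfl | hXpos
  · simpa using mul_nonneg hZ hD.le
  have hY : 0 < Y := hXpos.trans_le hXY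
  have : κ * Y ≤ Z * D := le_of_mul_le_mul_right (by linarith) hY
  nlinarith

theorem eq_sum_layers {c : ℕ → ℝ} {N : ℕ} (hN : ∀ i, N ≤ i → c i = 0) (i : ℕ) :
    c i = ∑ m ∈ range N, (c m - c (m + 1)) * if i ≤ m then 1 else 0 := by
  simp only [mul_ite, mul_one, mul_zero]
  rw [← sum_filter]
  rcases le_or_gt N i with h | h
  · rw [hN i h, sum_eq_zero]
    intro m hm
    simp only [mem_filter, mem_range] at hm
    omega
  · have hfilter : (range N).filter (i ≤ ·) = Ico i N := by
      ext m
      simp only [mem_filter, mem_range, mem_Ico]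
      omega
    rw [hfilter, sum_Ico_eq_sub _ h.le, sum_range_sub', sum_range_sub', hN N le_rfl]
    ring

theorem mul_min_tsub_le_min_sq {a b ℓ : ℕ} (hba : b ≤ 4 * a) :
    b * min b (ℓ - a) ≤ min b ℓ ^ 2 := by
  rcases le_total b ℓ with hbℓ | hℓb
  · rw [min_eq_left hbℓ, sq]
    exact Nat.mul_le_mul_left b (min_le_left _ _)
  rcases le_total ℓ a with hℓa | haℓ
  · simp [Nat.sub_eq_zero_of_le hℓa]
  obtain ⟨ρ, rfl⟩ := Nat.exists_eq_add_of_le haℓ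
  rw [min_eq_right hℓb, Nat.add_sub_cancel_left, min_eq_right (by omega)]
  -- `b ρ ≤ 4 a ρ ≤ (a + ρ)²`
  nlinarith [sq_nonneg ((a : ℤ) - ρ)]

theorem shifting_inequality {c : ℕ → ℝ} (hc : Antitone c) {N : ℕ}
    (hN : ∀ i, N ≤ i → c i = 0) {a b : ℕ} (hba : b ≤ 4 * a) :
    √b * √(∑ i ∈ Ico a (a + b), c i ^ 2) ≤ ∑ i ∈ range b, c i := by
  -- `c` is a nonnegative combination of indicators of initial segments `[0, m]`, so by Minkowski
  -- it suffices to treat one indicator, which is `mul_min_tsub_le_min_sq`.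
  set t : ℕ → ℝ := fun m => c m - c (m + 1)
  have hlayer : ∀ m, √b * √(∑ i ∈ Ico a (a + b), (t m * if i ≤ m then 1 else 0) ^ 2) ≤
      ∑ i ∈ range b, t m * if i ≤ m then 1 else 0 := by
    intro m
    have hB : ((Ico a (a + b)).filter (· ≤ m)).card = min b (m + 1 - a) := by
      have : (Ico a (a + b)).filter (· ≤ m) = Ico a (min (a + b) (m + 1)) := by
        ext i
        simp only [mem_filter, mem_Ico]
        omega
      rw [this, Nat.card_Ico]
      omega
    have hF : ((range b).filter (· ≤ m)).card = min b (m + 1) := by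
      rw [← card_range (min b (m + 1))]
      congr 1
      ext i
      simp only [mem_filter, mem_range]
      omega
    simp only [mul_pow, ← mul_sum, ite_pow, one_pow, ne_eq, OfNat.ofNat_ne_zero,
      not_false_eq_true, zero_pow, sum_boole, hB, hF]
    rw [Real.sqrt_mul (sq_nonneg _), Real.sqrt_sq (sub_nonneg.2 (hc (Nat.le_succ m))),
      mul_left_comm, ← Real.sqrt_mul (Nat.cast_nonneg _)]
    refine mul_le_mul_of_nonneg_left ?_ (sub_nonneg.2 (hc (Nat.le_succ m)))
    rw [← Real.sqrt_sq (Nat.cast_nonneg (α := ℝ) (min b (m + 1)))]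
    exact Real.sqrt_le_sqrt (by exact_mod_cast mul_min_tsub_le_min_sq hba)
  calc √b * √(∑ i ∈ Ico a (a + b), c i ^ 2)
      = √b * √(∑ i ∈ Ico a (a + b), (∑ m ∈ range N, t m * if i ≤ m then 1 else 0) ^ 2) := by
        rw [← sum_congr rfl fun i _ => congrArg (· ^ 2) (eq_sum_layers hN i)]
    _ ≤ √b * ∑ m ∈ range N, √(∑ i ∈ Ico a (a + b), (t m * if i ≤ m then 1 else 0) ^ 2) := by
        gcongr
        exact sqrt_sum_sq_sum_le _ _ _
    _ ≤ ∑ m ∈ range N, ∑ i ∈ range b, t m * if i ≤ m then 1 else 0 := by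
        rw [mul_sum]
        exact sum_le_sum fun m _ => hlayer m
    _ = ∑ i ∈ range b, c i := by
        rw [sum_comm]
        exact sum_congr rfl fun i _ => (eq_sum_layers hN i).symm

theorem sqrt_mul_sum_sqrt_blocks_le {c : ℕ → ℝ} (hc : Antitone c) {N : ℕ}
    (hN : ∀ i, N ≤ i → c i = 0) {a b : ℕ} (hb : 0 < b) (hba : b ≤ 4 * a) :
    √b * ∑ k ∈ range N, √(∑ i ∈ Ico (a + k * b) (a + b + k * b), c i ^ 2) ≤
      ∑ i ∈ range N, c i := by
  have hblock : ∀ k, √b * √(∑ i ∈ Ico (a + k * b) (a + b + k * b), c i ^ 2) ≤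
      ∑ i ∈ range b, c (k * b + i) := fun k => by
    rw [← sum_Ico_add (fun i => c i ^ 2) a (a + b) (k * b)]
    exact shifting_inequality (c := fun i => c (k * b + i)) (fun i j h => hc (by omega))
      (N := N) (fun i hi => hN _ (by omega)) hba
  have hconcat : ∀ M, ∑ k ∈ range M, ∑ i ∈ range b, c (k * b + i) = ∑ i ∈ range (M * b), c i := by
    intro M
    induction M with
    | zero => simp
    | succ M ih => rw [sum_range_succ, ih, Nat.succ_mul, sum_range_add]
  calc √b * ∑ k ∈ range N, √(∑ i ∈ Ico (a + k * b) (a + b + k * b), c i ^ 2)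
      ≤ ∑ k ∈ range N, ∑ i ∈ range b, c (k * b + i) := by
        rw [mul_sum]
        exact sum_le_sum fun k _ => hblock k
    _ = ∑ i ∈ range N, c i := by
        rw [hconcat, ← sum_subset (range_subset_range.2 (Nat.le_mul_of_pos_right N hb))]
        intro i _ hi
        exact hN i (by simpa using hi)

theorem exists_antitone_rearrangement {n : ℕ} (w : Fin n → ℝ) :
    ∃ (r : Fin n ≃ Fin n) (c : ℕ → ℝ),
      Antitone c ∧ (∀ i, n ≤ i → c i = 0) ∧ ∀ j, c (r j) = |w j| := by
  set σ := Tuple.sort fun j => -|w j|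
  have hσ : Antitone fun i => |w (σ i)| := fun i j h => by
    simpa using Tuple.monotone_sort (fun j => -|w j|) h
  refine ⟨σ.symm, fun i => if h : i < n then |w (σ ⟨i, h⟩)| else 0, ?_, ?_, ?_⟩
  · intro i i' h
    dsimp only
    split_ifs with h' hi
    · exact hσ (Fin.mk_le_mk.2 h)
    · omega
    · exact abs_nonneg _
    · rfl
  · intro i hi
    simp [dif_neg (show ¬i < n by omega)]
  · intro j
    simp

theorem sqrt_mul_sum_sqrt_sum_sq_le_of_rank {n : ℕ} {r : Fin n ≃ Fin n} {c : ℕ → ℝ} {w : Fin n → ℝ}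
    (hc : Antitone c) (hcn : ∀ i, n ≤ i → c i = 0) (hcr : ∀ j, c (r j) = |w j|) {a b : ℕ}
    (hb : 0 < b) (hba : b ≤ 4 * a) {U : ℕ → Finset (Fin n)}
    (hU : ∀ k, ∀ j ∈ U k, (r j : ℕ) ∈ Ico (a + k * b) (a + b + k * b)) :
    √b * ∑ k ∈ range n, √(∑ j ∈ U k, w j ^ 2) ≤ ∑ j, |w j| := by
  have hr : Function.Injective fun j => (r j : ℕ) := Fin.val_injective.comp r.injective
  have hblock : ∀ k, ∑ j ∈ U k, w j ^ 2 ≤ ∑ i ∈ Ico (a + k * b) (a + b + k * b), c i ^ 2 := by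
    intro k
    calc ∑ j ∈ U k, w j ^ 2 = ∑ i ∈ (U k).image fun j => (r j : ℕ), c i ^ 2 := by
          rw [sum_image hr.injOn]
          exact sum_congr rfl fun j _ => by rw [hcr, sq_abs]
      _ ≤ ∑ i ∈ Ico (a + k * b) (a + b + k * b), c i ^ 2 :=
          sum_le_sum_of_subset_of_nonneg (image_subset_iff.2 (hU k)) fun _ _ _ => sq_nonneg _
  calc √b * ∑ k ∈ range n, √(∑ j ∈ U k, w j ^ 2)
      ≤ √b * ∑ k ∈ range n, √(∑ i ∈ Ico (a + k * b) (a + b + k * b), c i ^ 2) := by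
        gcongr with k
        exact hblock k
    _ ≤ ∑ i ∈ range n, c i := sqrt_mul_sum_sqrt_blocks_le hc hcn hb hba
    _ = ∑ j, |w j| := by
        rw [← Fin.sum_univ_eq_sum_range, ← r.sum_comp]
        exact sum_congr rfl fun j _ => hcr j

theorem exists_rank_blocks {n : ℕ} (r : Fin n ≃ Fin n) (S : Finset (Fin n)) (a : ℕ) {b : ℕ}
    (hb : 0 < b) :
    ∃ J : Finset (Fin n), S ⊆ J ∧ J.card ≤ S.card + a ∧ ∃ U : ℕ → Finset (Fin n),
      (∀ k, Disjoint (U k) J ∧ (U k).card ≤ b ∧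
        ∀ j ∈ U k, j ∈ Sᶜ ∧ (r j : ℕ) ∈ Ico (a + k * b) (a + b + k * b)) ∧
      ∀ j (v : ℝ), ∑ k ∈ range n, (if j ∈ U k then v else 0) = if j ∈ J then 0 else v := by
  have hr : Function.Injective fun j => (r j : ℕ) := Fin.val_injective.comp r.injective
  set J := S ∪ univ.filter fun j => (r j : ℕ) < a
  -- `U k` consists of the entries of ranks `a + k b, …, a + k b + b - 1` outside `S`
  set U : ℕ → Finset (Fin n) := fun k => univ.filter fun j => j ∉ J ∧ (r j - a) / b = k
  have hJ : ∀ j, j ∉ J ↔ j ∈ Sᶜ ∧ a ≤ r j := fun j => by simp [J]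
  have hU : ∀ k, ∀ j ∈ U k, j ∈ Sᶜ ∧ (r j : ℕ) ∈ Ico (a + k * b) (a + b + k * b) := by
    intro k j hj
    obtain ⟨hjJ, rfl⟩ := by simpa [U] using hj
    have := (Nat.div_eq_iff hb (x := r j - a)).1 rfl
    rw [hJ] at hjJ
    exact ⟨hjJ.1, mem_Ico.2 (by omega)⟩
  refine ⟨J, subset_union_left, ?_, U, fun k => ⟨?_, ?_, hU k⟩, fun j v => ?_⟩
  · refine (card_union_le _ _).trans (Nat.add_le_add_left ?_ _)
    calc (univ.filter fun j => (r j : ℕ) < a).card ≤ (range a).card :=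
          card_le_card_of_injOn _ (fun j hj => by simpa using hj) hr.injOn
      _ = a := card_range a
  · exact disjoint_left.2 fun j hj => (mem_filter.1 hj).2.1
  · calc (U k).card ≤ (Ico (a + k * b) (a + b + k * b)).card :=
          card_le_card_of_injOn _ (fun j hj => (hU k j hj).2) hr.injOn
      _ = b := by rw [Nat.card_Ico]; omega
  · by_cases hj : j ∈ J
    · simp [U, hj]
    · have hq : (r j - a) / b < n := (Nat.div_le_self _ _).trans_lt (by omega)
      simp [U, hj, hq]

theorem exists_blocks_decomposition {n : ℕ} (x : Fin n → ℝ) (S : Finset (Fin n)) {a b : ℕ}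
    (hb : 0 < b) (hba : b ≤ 4 * a) :
    ∃ J : Finset (Fin n), S ⊆ J ∧ J.card ≤ S.card + a ∧
    ∃ (U : ℕ → Finset (Fin n)) (u : ℕ → Fin n → ℝ),
      (∀ k, Disjoint (U k) J ∧ (U k).card ≤ b ∧ ∀ j ∉ U k, u k j = 0) ∧
      x = (fun j => if j ∈ J then x j else 0) + ∑ k ∈ range n, u k ∧
      √b * ∑ k ∈ range n, √(∑ j, u k j ^ 2) ≤ ∑ j ∈ Sᶜ, |x j| := by
  set w : Fin n → ℝ := fun j => if j ∈ Sᶜ then x j else 0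
  obtain ⟨r, c, hc, hcn, hcr⟩ := exists_antitone_rearrangement w
  obtain ⟨J, hSJ, hJ, U, hU, hpart⟩ := exists_rank_blocks r S a hb
  refine ⟨J, hSJ, hJ, U, fun k j => if j ∈ U k then x j else 0,
    fun k => ⟨(hU k).1, (hU k).2.1, fun j hj => if_neg hj⟩, funext fun j => ?_, ?_⟩
  · by_cases hj : j ∈ J <;> simp [hpart, hj]
  have hnorm : ∀ k, ∑ j, (if j ∈ U k then x j else 0) ^ 2 = ∑ j ∈ U k, w j ^ 2 := by
    intro k
    rw [← sum_subset (subset_univ (U k)) fun j _ hj => by simp [hj]]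
    exact sum_congr rfl fun j hj => by simp [w, hj, mem_compl.1 ((hU k).2.2 j hj).1]
  calc √b * ∑ k ∈ range n, √(∑ j, (if j ∈ U k then x j else 0) ^ 2)
      = √b * ∑ k ∈ range n, √(∑ j ∈ U k, w j ^ 2) := by simp only [hnorm]
    _ ≤ ∑ j, |w j| := sqrt_mul_sum_sqrt_sum_sq_le_of_rank hc hcn hcr hb hba fun k j hj =>
        ((hU k).2.2 j hj).2
    _ = ∑ j ∈ Sᶜ, |x j| := by
        simp only [w, apply_ite abs, abs_zero]
        rw [sum_ite_mem, univ_inter]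

theorem mu1_nonneg {m n : ℕ} (A : Matrix (Fin m) (Fin n) ℝ) (s : ℕ) : 0 ≤ mu1 A s :=
  Real.sSup_nonneg <| by
    rintro t ⟨T, -, i, -, rfl⟩
    exact sum_nonneg fun j _ => abs_nonneg _

theorem transpose_mul_self_apply {m n : ℕ} (A : Matrix (Fin m) (Fin n) ℝ) (i j : Fin n) :
    (Aᵀ * A) i j = ∑ k, A k i * A k j := by
  simp [mul_apply]

theorem sum_abs_transpose_mul_self_le_mu1 {m n : ℕ} (A : Matrix (Fin m) (Fin n) ℝ) {s : ℕ}
    {T : Finset (Fin n)} {i : Fin n} (hT : T.card ≤ s) (hi : i ∉ T) :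
    ∑ j ∈ T, |(Aᵀ * A) i j| ≤ mu1 A s := by
  have hbdd : BddAbove {t : ℝ | ∃ S : Finset (Fin n), S.card ≤ s ∧ ∃ i : Fin n, i ∉ S ∧
      t = ∑ j ∈ S, |∑ k : Fin m, A k i * A k j|} := by
    refine (Set.finite_range fun p : Finset (Fin n) × Fin n =>
      ∑ j ∈ p.1, |∑ k : Fin m, A k p.2 * A k j|).subset ?_ |>.bddAbove
    rintro t ⟨S, -, i, -, rfl⟩
    exact ⟨(S, i), rfl⟩
  simp only [transpose_mul_self_apply]
  exact le_csSup hbdd ⟨T, hT, i, hi, rfl⟩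

theorem transpose_mul_self_apply_self {m n : ℕ} {A : Matrix (Fin m) (Fin n) ℝ}
    (hA : ∀ j, ∑ k, (A k j) ^ 2 = 1) (j : Fin n) : (Aᵀ * A) j j = 1 := by
  simpa [transpose_mul_self_apply, sq] using hA j

theorem transpose_mul_self_apply_comm {m n : ℕ} (A : Matrix (Fin m) (Fin n) ℝ) (i j : Fin n) :
    (Aᵀ * A) i j = (Aᵀ * A) j i := by
  simp only [transpose_mul_self_apply, mul_comm]

theorem mulVec_dotProduct_mulVec {m n : ℕ} (A : Matrix (Fin m) (Fin n) ℝ) (u v : Fin n → ℝ) :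
    (A *ᵥ u) ⬝ᵥ (A *ᵥ v) = ∑ i, ∑ j, u i * (Aᵀ * A) i j * v j := by
  rw [← vecMul_transpose, ← dotProduct_mulVec, mulVec_mulVec]
  simp only [dotProduct, mulVec, mul_sum, mul_assoc]

theorem sum_abs_transpose_mul_self_sub_one_le_mu1 {m n : ℕ} {A : Matrix (Fin m) (Fin n) ℝ}
    (hA : ∀ j, ∑ k, (A k j) ^ 2 = 1) {t : ℕ} {J : Finset (Fin n)} (hJ : J.card ≤ t + 1)
    {i : Fin n} (hi : i ∈ J) :
    ∑ j ∈ J, |(Aᵀ * A - 1 : Matrix _ _ ℝ) i j| ≤ mu1 A t := by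
  have hii : |(Aᵀ * A - 1 : Matrix _ _ ℝ) i i| = 0 := by
    simp [transpose_mul_self_apply_self hA]
  rw [← sum_erase J hii]
  calc ∑ j ∈ J.erase i, |(Aᵀ * A - 1 : Matrix _ _ ℝ) i j|
      = ∑ j ∈ J.erase i, |(Aᵀ * A) i j| := sum_congr rfl fun j hj => by
        rw [Matrix.sub_apply, one_apply_ne (ne_of_mem_erase hj).symm, sub_zero]
    _ ≤ mu1 A t := sum_abs_transpose_mul_self_le_mu1 A
        (by rw [card_erase_of_mem hi]; omega) (notMem_erase i J)

theorem abs_mulVec_dotProduct_mulVec_self_sub_le {m n : ℕ} {A : Matrix (Fin m) (Fin n) ℝ}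
    (hA : ∀ j, ∑ k, (A k j) ^ 2 = 1) {t : ℕ} {J : Finset (Fin n)} (hJ : J.card ≤ t + 1)
    {y : Fin n → ℝ} (hy : ∀ j ∉ J, y j = 0) :
    |(A *ᵥ y) ⬝ᵥ (A *ᵥ y) - ∑ j, y j ^ 2| ≤ mu1 A t * ∑ j, y j ^ 2 := by
  have hdiff : (A *ᵥ y) ⬝ᵥ (A *ᵥ y) - ∑ j, y j ^ 2 =
      ∑ i ∈ J, ∑ j ∈ J, y i * (Aᵀ * A - 1 : Matrix _ _ ℝ) i j * y j := by
    rw [mulVec_dotProduct_mulVec, ← sum_sum_mul_eq_of_support hy hy (Aᵀ * A - 1 : Matrix _ _ ℝ)]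
    simp [Matrix.sub_apply, one_apply, mul_sub, sub_mul, sum_sub_distrib, sq]
  rw [hdiff]
  refine (abs_sum_sum_mul_le_of_sum_abs_le J J _ y y
    (fun i hi => sum_abs_transpose_mul_self_sub_one_le_mu1 hA hJ hi) (fun j hj => ?_)).trans ?_
  · simpa only [Matrix.sub_apply, one_apply, transpose_mul_self_apply_comm A _ j, eq_comm] using
      sum_abs_transpose_mul_self_sub_one_le_mu1 hA hJ hj
  · rw [Real.mul_self_sqrt (sum_nonneg fun j _ => sq_nonneg _)]
    exact mul_le_mul_of_nonneg_left
      (sum_le_univ_sum_of_nonneg fun j => sq_nonneg _) (mu1_nonneg A t)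

theorem abs_mulVec_dotProduct_mulVec_le {m n : ℕ} (A : Matrix (Fin m) (Fin n) ℝ) {K : ℕ}
    {U V : Finset (Fin n)} (hUV : Disjoint U V) (hU : U.card ≤ K) (hV : V.card ≤ K)
    {u v : Fin n → ℝ} (hu : ∀ i ∉ U, u i = 0) (hv : ∀ j ∉ V, v j = 0) :
    |(A *ᵥ u) ⬝ᵥ (A *ᵥ v)| ≤ mu1 A K * (√(∑ i, u i ^ 2) * √(∑ j, v j ^ 2)) := by
  rw [mulVec_dotProduct_mulVec, sum_sum_mul_eq_of_support hu hv (Aᵀ * A)]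
  refine (abs_sum_sum_mul_le_of_sum_abs_le U V _ u v
    (fun i hi => sum_abs_transpose_mul_self_le_mu1 A hV (disjoint_left.mp hUV hi))
    (fun j hj => ?_)).trans ?_
  · simpa only [transpose_mul_self_apply_comm A _ j] using
      sum_abs_transpose_mul_self_le_mu1 A hU (disjoint_right.mp hUV hj)
  · gcongr
    · exact mu1_nonneg A K
    · exact subset_univ U
    · exact subset_univ V

theorem le_mulVec_add_sum_dotProduct_mulVec {m n : ℕ} {A : Matrix (Fin m) (Fin n) ℝ}
    (hA : ∀ j, ∑ k, (A k j) ^ 2 = 1) {t K : ℕ} {J : Finset (Fin n)} (hJt : J.card ≤ t + 1)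
    (hJK : J.card ≤ K) {y : Fin n → ℝ} (hy : ∀ j ∉ J, y j = 0) {ι : Type*} (T : Finset ι)
    {U : ι → Finset (Fin n)} {u : ι → Fin n → ℝ}
    (hU : ∀ k, Disjoint (U k) J ∧ (U k).card ≤ K ∧ ∀ j ∉ U k, u k j = 0) {θ : ℝ}
    (hθ : ∑ k ∈ T, √(∑ j, u k j ^ 2) ≤ θ * √(∑ j, y j ^ 2)) :
    (1 - mu1 A t - θ * mu1 A K) * ∑ j, y j ^ 2 ≤ (A *ᵥ (y + ∑ k ∈ T, u k)) ⬝ᵥ (A *ᵥ y) := by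
  have hiso := abs_mulVec_dotProduct_mulVec_self_sub_le hA hJt hy
  have hcross : |∑ k ∈ T, (A *ᵥ u k) ⬝ᵥ (A *ᵥ y)| ≤
      mu1 A K * (∑ k ∈ T, √(∑ j, u k j ^ 2)) * √(∑ j, y j ^ 2) := by
    rw [mul_assoc, sum_mul, mul_sum]
    refine (abs_sum_le_sum_abs _ _).trans (sum_le_sum fun k _ => ?_)
    obtain ⟨hdisj, hcard, hu⟩ := hU k
    exact abs_mulVec_dotProduct_mulVec_le A hdisj hcard hJK hu hy
  have htail := mul_le_mul_of_nonneg_left hθ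
    (mul_nonneg (mu1_nonneg A K) (Real.sqrt_nonneg (∑ j, y j ^ 2)))
  rw [← Real.mul_self_sqrt (sum_nonneg fun j _ => sq_nonneg (y j))] at hiso ⊢
  rw [mulVec_add, add_dotProduct, mulVec_sum, sum_dotProduct]
  linarith [abs_le.1 hiso, abs_le.1 hcross]

theorem mulVec_dotProduct_mulVec_le {m n : ℕ} {A : Matrix (Fin m) (Fin n) ℝ}
    (hA : ∀ j, ∑ k, (A k j) ^ 2 = 1) {t : ℕ} {J : Finset (Fin n)} (hJ : J.card ≤ t + 1)
    {y : Fin n → ℝ} (hy : ∀ j ∉ J, y j = 0) (x : Fin n → ℝ) :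
    (A *ᵥ x) ⬝ᵥ (A *ᵥ y) ≤
      √(∑ k, (A *ᵥ x) k ^ 2) * (√(1 + mu1 A t) * √(∑ j, y j ^ 2)) := by
  have hiso := abs_mulVec_dotProduct_mulVec_self_sub_le hA hJ hy
  refine (Real.sum_mul_le_sqrt_mul_sqrt _ _ _).trans
    (mul_le_mul_of_nonneg_left ?_ (Real.sqrt_nonneg _))
  rw [← Real.sqrt_mul (by linarith [mu1_nonneg A t])]
  refine Real.sqrt_le_sqrt ?_
  simp only [dotProduct, ← sq] at hiso
  linarith [(abs_le.1 hiso).2]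

theorem stmt16_general {m n : ℕ} (A : Matrix (Fin m) (Fin n) ℝ)
    (hA : ∀ j, ∑ k, (A k j) ^ 2 = 1)
    (s a b : ℕ) (hb1 : 1 ≤ b) (hb4a : b ≤ 4 * a)
    (τ : ℝ) (hτ : 0 < τ) :
    ∀ x : Fin n → ℝ, ∀ S : Finset (Fin n), S.card ≤ s →
      (∑ j ∈ Sᶜ, |x j|) ≤ τ * ∑ j ∈ S, |x j| →
      Real.sqrt (∑ k, (A.mulVec x k) ^ 2) ≥
        (1 - mu1 A (s + a - 1) -
            τ * Real.sqrt ((s : ℝ) / b) * mu1 A (s + a + b - 1)) /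
            Real.sqrt (1 + mu1 A (s + a - 1)) *
          Real.sqrt (∑ j ∈ S, (x j) ^ 2) := by
  intro x S hS hcone
  obtain ⟨J, hSJ, hJ, U, u, hU, hxu, hu⟩ := exists_blocks_decomposition x S hb1 hb4a
  set y : Fin n → ℝ := fun j => if j ∈ J then x j else 0
  have hy : ∀ j ∉ J, y j = 0 := fun j hj => if_neg hj
  have hxS : √(∑ j ∈ S, x j ^ 2) ≤ √(∑ j, y j ^ 2) := Real.sqrt_le_sqrt <|
    (sum_congr rfl fun j hj => by simp [y, hSJ hj]).trans_le
      (sum_le_univ_sum_of_nonneg fun j => sq_nonneg _)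
  have htail : ∑ k ∈ range n, √(∑ j, u k j ^ 2) ≤ τ * √((s : ℝ) / b) * √(∑ j, y j ^ 2) := by
    have hl1 : ∑ j ∈ S, |x j| ≤ √s * √(∑ j ∈ S, x j ^ 2) :=
      (sum_abs_le_sqrt_card_mul_sqrt S x).trans (by gcongr)
    refine le_trans ?_ (mul_le_mul_of_nonneg_left hxS (by positivity))
    rw [Real.sqrt_div (Nat.cast_nonneg s), mul_div_assoc', div_mul_eq_mul_div,
      le_div_iff₀' (Real.sqrt_pos.2 (by exact_mod_cast hb1)), mul_assoc]
    exact hu.trans (hcone.trans (mul_le_mul_of_nonneg_left hl1 hτ.le))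
  have hlow := le_mulVec_add_sum_dotProduct_mulVec hA (t := s + a - 1) (K := s + a + b - 1)
    (by omega) (by omega) hy (range n)
    (fun k => ⟨(hU k).1, by have := (hU k).2.1; omega, (hU k).2.2⟩) htail
  have hup := mulVec_dotProduct_mulVec_le hA (t := s + a - 1) (by omega) hy x
  rw [← hxu, ← Real.sq_sqrt (sum_nonneg fun j _ => sq_nonneg (y j))] at hlow
  exact div_mul_le_of_mul_sq_le (Real.sqrt_pos.2 (by linarith [mu1_nonneg A (s + a - 1)]))
    (Real.sqrt_nonneg _) hxS (Real.sqrt_nonneg _) (by linarith)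

/-- Cumulative coherence implies the restricted eigenvalue condition (general form): if
`1 ≤ b ≤ 4a` and `μ₁(s+a−1) + τ√(s/b) μ₁(s+a+b−1) < 1`, then for every `x` and every `S`
with `|S| ≤ s` and `‖x_{Sᶜ}‖₁ ≤ τ‖x_S‖₁`,
`‖Ax‖₂ ≥ [(1 − μ₁(s+a−1) − τ√(s/b) μ₁(s+a+b−1)) / √(1 + μ₁(s+a−1))] ‖x_S‖₂`; hence `A`
satisfies the RE-condition of order `s` and `τ` with the corresponding lower bound on
`K(s,τ)`. -/
theorem stmt16 {m n : ℕ} (A : Matrix (Fin m) (Fin n) ℝ)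
    (hA : ∀ j, ∑ k, (A k j) ^ 2 = 1)
    (s a b : ℕ) (hs1 : 1 ≤ s) (ha1 : 1 ≤ a) (hb1 : 1 ≤ b) (hb4a : b ≤ 4 * a)
    (hsn : s + a + b - 1 ≤ n - 1)
    (τ : ℝ) (hτ : 0 < τ)
    (hcond : mu1 A (s + a - 1) +
      τ * Real.sqrt ((s : ℝ) / b) * mu1 A (s + a + b - 1) < 1) :
    ∀ x : Fin n → ℝ, ∀ S : Finset (Fin n), S.card ≤ s →
      (∑ j ∈ Sᶜ, |x j|) ≤ τ * ∑ j ∈ S, |x j| →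
      Real.sqrt (∑ k, (A.mulVec x k) ^ 2) ≥
        (1 - mu1 A (s + a - 1) -
            τ * Real.sqrt ((s : ℝ) / b) * mu1 A (s + a + b - 1)) /
            Real.sqrt (1 + mu1 A (s + a - 1)) *
          Real.sqrt (∑ j ∈ S, (x j) ^ 2) :=
  stmt16_general A hA s a b hb1 hb4a τ hτ
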